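/- arXiv:1704.06828 — 7 statements merged into one kernel-verified Lean document; each statement's English description precedes it below -/
import Mathlib

section
/- Fix B > 0 and a constant average shared bandwidth c > 0. Define g(α) = B(B + c/α)/(B + (1-α)(c/α)) for α ∈ (0,1]. Then g is strictly monotonically increasing in α. -/
theorem stmt_2 (B c : ℝ) (hB : 0 < B) (hc : 0 < c) :
    StrictMonoOn
      (fun α : ℝ => B * (B + c / α) / (B + (1 - α) * (c / α)))
      (Set.Ioc (0:ℝ) 1) := by
  intro a ha b hb hab
  obtain ⟨ha0, ha1⟩ := ha
  obtain ⟨hb0, hb1⟩ := hb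
  have hda : 0 < B + (1 - a) * (c / a) := by
    have : 0 ≤ (1 - a) * (c / a) := mul_nonneg (by linarith) (by positivity)
    linarith
  have hdb : 0 < B + (1 - b) * (c / b) := by
    have : 0 ≤ (1 - b) * (c / b) := mul_nonneg (by linarith) (by positivity)
    linarith
  simp only
  rw [div_lt_div_iff₀ hda hdb]
  have h1 : c / a = c / a := rfl
  field_simp
  nlinarith [mul_pos (mul_pos (mul_pos ha0 hb0) hB) (mul_pos (mul_pos hc hc) (sub_pos.mpr hab)), mul_pos (mul_pos hc hc) (sub_pos.mpr hab)]
end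

section
/- Let T₁, T₂ > 0 and define the equilibrium revenue R₁(T₁,T₂) = T₁(T₁+1)/(bT₁+a)² where b = (3T₂+4)/(T₂+2) and a = (4T₂+4)/(T₂+2). Then for fixed T₂, R₁ is strictly increasing and strictly concave in T₁. -/
open Set

private lemma key_aux (a b : ℝ) (ha : 0 < a) (hb : 0 < b) (hab : 0 < 2*a - b)
    (hab2 : a - 2*b < 0) :
    StrictMonoOn (fun x : ℝ => x*(x+1)/(b*x+a)^2) (Set.Ioi 0) ∧
    StrictConcaveOn ℝ (Set.Ioi 0) (fun x : ℝ => x*(x+1)/(b*x+a)^2) := by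
  set U : Set ℝ := {x | 0 < b*x+a} with hU
  have hUopen : IsOpen U := isOpen_lt continuous_const (by continuity)
  have hsub : Set.Ioi (0:ℝ) ⊆ U := by
    intro x hx
    have hx0 : 0 < x := hx
    show 0 < b*x+a
    nlinarith
  set f : ℝ → ℝ := fun x => x*(x+1)/(b*x+a)^2 with hf
  set g : ℝ → ℝ := fun x => ((2*a-b)*x+a)/(b*x+a)^3 with hg
  have hlin : ∀ x : ℝ, HasDerivAt (fun y => b*y+a) b x := by
    intro x
    simpa using ((hasDerivAt_id x).const_mul b).add_const a
  have hfd : ∀ x ∈ U, HasDerivAt f (g x) x := by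
    intro x hx
    have hx' : 0 < b*x+a := hx
    have hne : b*x+a ≠ 0 := ne_of_gt hx'
    have hu : HasDerivAt (fun y : ℝ => y*(y+1)) (1*(x+1)+x*1) x :=
      (hasDerivAt_id x).mul ((hasDerivAt_id x).add_const 1)
    have hv : HasDerivAt (fun y : ℝ => (b*y+a)^2) (2*(b*x+a)^1*b) x := by
      simpa using (hlin x).fun_pow 2
    have hd := hu.fun_div hv (pow_ne_zero 2 hne)
    convert hd using 1
    · rfl
    · rfl
    simp only [hg]
    field_simp
    ring
  have hgd : ∀ x ∈ U, HasDerivAt g ((2*b*(b-2*a)*x + 2*a*(a-2*b))/(b*x+a)^4) x := by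
    intro x hx
    have hx' : 0 < b*x+a := hx
    have hne : b*x+a ≠ 0 := ne_of_gt hx'
    have hu : HasDerivAt (fun y : ℝ => (2*a-b)*y+a) (2*a-b) x := by
      simpa using ((hasDerivAt_id x).const_mul (2*a-b)).add_const a
    have hv : HasDerivAt (fun y : ℝ => (b*y+a)^3) (3*(b*x+a)^2*b) x := by
      simpa using (hlin x).fun_pow 3
    have hd := hu.fun_div hv (pow_ne_zero 3 hne)
    convert hd using 1
    · rfl
    · rfl
    field_simp
    ring
  have hcont : ContinuousOn f (Set.Ioi 0) :=
    fun x hx => ((hfd x (hsub hx)).differentiableAt.continuousAt).continuousWithinAt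
  have hderiv_eq : ∀ x ∈ U, deriv f x = g x := fun x hx => (hfd x hx).deriv
  constructor
  · apply strictMonoOn_of_deriv_pos (convex_Ioi 0) hcont
    intro x hx
    rw [interior_Ioi] at hx
    have hx0 : 0 < x := hx
    have hx' : 0 < b*x+a := hsub hx
    rw [hderiv_eq x (hsub hx)]
    exact div_pos (by nlinarith) (by positivity)
  · apply strictConcaveOn_of_deriv2_neg (convex_Ioi 0) hcont
    intro x hx
    rw [interior_Ioi] at hx
    have hx0 : 0 < x := hx
    have hxU : x ∈ U := hsub hx
    have hx' : 0 < b*x+a := hxU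
    have heq : deriv f =ᶠ[nhds x] g :=
      Filter.eventuallyEq_of_mem (hUopen.mem_nhds hxU) hderiv_eq
    have h2 : deriv (deriv f) x = deriv g x := heq.deriv_eq
    show deriv^[2] f x < 0
    have h3 : deriv^[2] f x = deriv (deriv f) x := rfl
    rw [h3, h2, (hgd x hxU).deriv]
    apply div_neg_of_neg_of_pos
    · nlinarith [mul_pos (mul_pos hb hx0) hab, mul_neg_of_pos_of_neg ha hab2]
    · positivity

theorem stmt_5 (T₂ : ℝ) (h₂ : 0 < T₂) :
    let b : ℝ := (3 * T₂ + 4) / (T₂ + 2)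
    let a : ℝ := (4 * T₂ + 4) / (T₂ + 2)
    let R₁ : ℝ → ℝ := fun T₁ => T₁ * (T₁ + 1) / (b * T₁ + a) ^ 2
    StrictMonoOn R₁ (Set.Ioi 0) ∧ StrictConcaveOn ℝ (Set.Ioi 0) R₁ := by
  intro b a R₁
  have h2 : (0:ℝ) < T₂ + 2 := by linarith
  have ha : 0 < a := div_pos (by linarith) h2
  have hb : 0 < b := div_pos (by linarith) h2
  have hab : 0 < 2*a - b := by
    have h : 2*a - b = (5*T₂+4)/(T₂+2) := by
      show 2*((4*T₂+4)/(T₂+2)) - (3*T₂+4)/(T₂+2) = _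
      field_simp
      ring
    rw [h]
    exact div_pos (by linarith) h2
  have hab2 : a - 2*b < 0 := by
    have h : a - 2*b = -2 := by
      show (4*T₂+4)/(T₂+2) - 2*((3*T₂+4)/(T₂+2)) = -2
      field_simp
      ring
    rw [h]; norm_num
  exact key_aux a b ha hb hab hab2
end

section
/- For B > 0, W > 0, α ∈ [0,1], the quantities x* = 3B²/(9B² + 12BW + 12B + 16(1-α)W) and w* = 4BW/(9B² + 12BW + 12B + 16(1-α)W) are both strictly increasing in α when W > 0 (holding B, W fixed), and the total x* + w* is strictly increasing in α. -/
theorem stmt_8 (B W : ℝ) (hB : 0 < B) (hW : 0 < W) :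
    let x : ℝ → ℝ := fun α => 3 * B ^ 2 / (9 * B ^ 2 + 12 * B * W + 12 * B + 16 * (1 - α) * W)
    let w : ℝ → ℝ := fun α => 4 * B * W / (9 * B ^ 2 + 12 * B * W + 12 * B + 16 * (1 - α) * W)
    StrictMonoOn x (Set.Icc 0 1) ∧ StrictMonoOn w (Set.Icc 0 1) ∧
    StrictMonoOn (fun α => x α + w α) (Set.Icc 0 1) := by
  intro x w
  have key : ∀ c : ℝ, 0 < c → StrictMonoOn
      (fun α => c / (9 * B ^ 2 + 12 * B * W + 12 * B + 16 * (1 - α) * W)) (Set.Icc 0 1) := by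
    intro c hc a ha b hb hab
    have hDb : 0 < 9 * B ^ 2 + 12 * B * W + 12 * B + 16 * (1 - b) * W := by
      have := hb.2; nlinarith
    have hlt : 9 * B ^ 2 + 12 * B * W + 12 * B + 16 * (1 - b) * W <
        9 * B ^ 2 + 12 * B * W + 12 * B + 16 * (1 - a) * W := by nlinarith
    exact div_lt_div_of_pos_left hc hDb hlt
  refine ⟨key _ (by positivity), key _ (by positivity), ?_⟩
  intro a ha b hb hab
  have h1 := key (3 * B ^ 2) (by positivity) ha hb hab
  have h2 := key (4 * B * W) (by positivity) ha hb hab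
  simp only [x, w]
  exact add_lt_add h1 h2
end

section
/- For any real C ≥ 0 and B, W > 0: (C + 1/(B+2W))² > (C + 1/(B+W)) · (C + B/(B+2W)²). -/
theorem stmt_13 (C B W : ℝ) (hC : 0 ≤ C) (hB : 0 < B) (hW : 0 < W) :
    (C + 1 / (B + 2 * W)) ^ 2 > (C + 1 / (B + W)) * (C + B / (B + 2 * W) ^ 2) := by
  have h1 : 0 < B + W := by linarith
  have h2 : 0 < B + 2 * W := by linarith
  rw [gt_iff_lt]
  rw [show (C + 1 / (B + W)) * (C + B / (B + 2 * W) ^ 2) =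
      (C*(B+W)+1) * (C*(B+2*W)^2 + B) / ((B+W)*(B+2*W)^2) by field_simp]
  rw [show (C + 1 / (B + 2 * W)) ^ 2 = (C*(B+2*W)+1)^2 / (B+2*W)^2 by field_simp]
  rw [div_lt_div_iff₀ (by positivity) (by positivity)]
  nlinarith [mul_pos (pow_pos h2 2) (show (0:ℝ) < C*B*W + W by positivity)]
end

section
/- In the symmetric N-SP model with degradation factor d ∈ (0,1], the total served traffic ρ_β(N) = B(B + (1 + β(d* - 1))W) / [(B + B/N + 2(1-α))(B + (1 + β(d*-1))W) + 2Bα] with d* = 2dN/(N+1) is strictly increasing in β ∈ [0,1] if d > (N+1)/(2N), and strictly decreasing in β if d < (N+1)/(2N). Consequently consumer surplus is maximized at β = 1 if d > (N+1)/(2N) and at β = 0 if d < (N+1)/(2N). -/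
private lemma frac_mono (B C K x y : ℝ) (hB : 0 < B) (hC : 0 < C) (hK : 0 < K)
    (hx : 0 < x) (hxy : x < y) :
    B * x / (C * x + K) < B * y / (C * y + K) := by
  have h1 : 0 < C * x + K := by positivity
  have h2 : 0 < C * y + K := by nlinarith
  rw [div_lt_div_iff₀ h1 h2]
  nlinarith [mul_pos (mul_pos hB hK) (sub_pos.mpr hxy)]

theorem stmt_17 (B W α d : ℝ) (N : ℕ) (hB : 0 < B) (hW : 0 < W)
    (hα : α ∈ Set.Ioc (0:ℝ) 1) (hd : d ∈ Set.Ioc (0:ℝ) 1) (hN : 2 ≤ N) :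
    let dstar : ℝ := 2 * d * N / (N + 1)
    let ρ : ℝ → ℝ := fun β =>
      B * (B + (1 + β * (dstar - 1)) * W) /
        ((B + B / N + 2 * (1 - α)) * (B + (1 + β * (dstar - 1)) * W) + 2 * B * α)
    (d > (N + 1) / (2 * N) →
      StrictMonoOn ρ (Set.Icc 0 1) ∧ ∀ β ∈ Set.Icc (0:ℝ) 1, ρ β ^ 2 / 2 ≤ ρ 1 ^ 2 / 2) ∧
    (d < (N + 1) / (2 * N) →
      StrictAntiOn ρ (Set.Icc 0 1) ∧ ∀ β ∈ Set.Icc (0:ℝ) 1, ρ β ^ 2 / 2 ≤ ρ 0 ^ 2 / 2) := by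
  intro dstar ρ
  obtain ⟨hα0, hα1⟩ := hα
  obtain ⟨hd0, hd1⟩ := hd
  have hNr : (2:ℝ) ≤ (N:ℝ) := by exact_mod_cast hN
  have hN0 : (0:ℝ) < (N:ℝ) := by linarith
  have hN1 : (0:ℝ) < (N:ℝ) + 1 := by linarith
  have hC : 0 < B + B / N + 2 * (1 - α) := by
    have : 0 < B / N := by positivity
    nlinarith
  have hK : 0 < 2 * B * α := by positivity
  have hds0 : 0 < dstar := by positivity
  -- positivity of X for β ∈ [0,1]
  have hX : ∀ β ∈ Set.Icc (0:ℝ) 1, 0 < B + (1 + β * (dstar - 1)) * W := by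
    intro β hβ
    obtain ⟨h0, h1⟩ := hβ
    have hc : 0 < 1 + β * (dstar - 1) := by
      rcases eq_or_lt_of_le h1 with h | h
      · rw [h]; nlinarith
      · nlinarith [mul_nonneg h0 hds0.le]
    nlinarith
  constructor
  · intro hgt
    have hds1 : 1 < dstar := by
      rw [gt_iff_lt, div_lt_iff₀ (by positivity)] at hgt
      rw [show dstar = 2 * d * N / (N + 1) from rfl, lt_div_iff₀ hN1]
      nlinarith
    have hmono : StrictMonoOn ρ (Set.Icc 0 1) := by
      intro a ha b hb hab
      have hXa := hX a ha
      have hlt : B + (1 + a * (dstar - 1)) * W < B + (1 + b * (dstar - 1)) * W := by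
        nlinarith [mul_pos (mul_pos (sub_pos.mpr hab) (sub_pos.mpr hds1)) hW]
      exact frac_mono B _ _ _ _ hB hC hK hXa hlt
    refine ⟨hmono, fun β hβ => ?_⟩
    have hle : ρ β ≤ ρ 1 := by
      rcases eq_or_lt_of_le hβ.2 with h | h
      · rw [h]
      · exact le_of_lt (hmono hβ (by constructor <;> norm_num) h)
    have h0 : 0 ≤ ρ β := by
      have := hX β hβ
      have hden : 0 < (B + B / N + 2 * (1 - α)) * (B + (1 + β * (dstar - 1)) * W) + 2 * B * α := by
        positivity
      positivity
    have := pow_le_pow_left₀ h0 hle 2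
    linarith
  · intro hlt
    have hds1 : dstar < 1 := by
      rw [lt_div_iff₀ (by positivity)] at hlt
      rw [show dstar = 2 * d * N / (N + 1) from rfl, div_lt_iff₀ hN1]
      nlinarith
    have hmono : StrictAntiOn ρ (Set.Icc 0 1) := by
      intro a ha b hb hab
      have hXb := hX b hb
      have hlt2 : B + (1 + b * (dstar - 1)) * W < B + (1 + a * (dstar - 1)) * W := by
        nlinarith [mul_pos (mul_pos (sub_pos.mpr hab) (sub_pos.mpr hds1)) hW]
      exact frac_mono B _ _ _ _ hB hC hK hXb hlt2
    refine ⟨hmono, fun β hβ => ?_⟩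
    have hle : ρ β ≤ ρ 0 := by
      rcases eq_or_lt_of_le hβ.1 with h | h
      · rw [← h]
      · exact le_of_lt (hmono (by constructor <;> norm_num) hβ h)
    have h0 : 0 ≤ ρ β := by
      have := hX β hβ
      have hden : 0 < (B + B / N + 2 * (1 - α)) * (B + (1 + β * (dstar - 1)) * W) + 2 * B * α := by
        positivity
      positivity
    have := pow_le_pow_left₀ h0 hle 2
    linarith
end

section
/- Let a > 0 and c₁, c₂ > 0, B₁, B₂ > 0. In the two-SP Cournot game with inverse demand P(x) = 1 - ax and latencies ℓ_k(x) = c_k·x/B_k, the marginal consumer surplus from additional bandwidth is larger for SP k than for SP -k if and only if B_{-k} > √(c_{-k}/c_k)·B_k + (2/a)(√(c_k·c_{-k}) - c_{-k}). In particular, when c₁ = c₂, this condition reduces to B_{-k} > B_k. -/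
set_option maxHeartbeats 800000


theorem stmt_18 (a c₁ c₂ B₁ B₂ x₁ x₂ : ℝ)
    (ha : 0 < a) (hc₁ : 0 < c₁) (hc₂ : 0 < c₂) (hB₁ : 0 < B₁) (hB₂ : 0 < B₂)
    (hx₁ : 0 < x₁) (hx₂ : 0 < x₂)
    (hfoc₁ : 1 - a * (x₁ + x₂) - a * x₁ - 2 * c₁ * x₁ / B₁ = 0)
    (hfoc₂ : 1 - a * (x₁ + x₂) - a * x₂ - 2 * c₂ * x₂ / B₂ = 0) :
    let M₁ : ℝ := -(c₁ * x₁ / B₁ ^ 2) * (-a - 2 * c₂ / B₂)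
    let M₂ : ℝ := -(c₂ * x₂ / B₂ ^ 2) * (-a - 2 * c₁ / B₁)
    (M₁ > M₂ ↔
      B₂ > Real.sqrt (c₂ / c₁) * B₁ + (2 / a) * (Real.sqrt (c₁ * c₂) - c₂)) ∧
    (c₁ = c₂ → (M₁ > M₂ ↔ B₂ > B₁)) := by
  intro M₁ M₂
  have hB₁' : B₁ ≠ 0 := hB₁.ne'
  have hB₂' : B₂ ≠ 0 := hB₂.ne'
  have hX : (0:ℝ) < a * B₂ + 2 * c₂ := by positivity
  have hY : (0:ℝ) < a * B₁ + 2 * c₁ := by positivity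
  -- relation between x₁ and x₂ from the FOCs
  have hE : x₁ * (a * B₁ + 2 * c₁) * B₂ = x₂ * (a * B₂ + 2 * c₂) * B₁ := by
    have h1 : (1 - a * (x₁ + x₂) - a * x₁ - 2 * c₁ * x₁ / B₁) * B₁ = 0 := by
      rw [hfoc₁]; ring
    have h2 : (1 - a * (x₁ + x₂) - a * x₂ - 2 * c₂ * x₂ / B₂) * B₂ = 0 := by
      rw [hfoc₂]; ring
    field_simp at h1 h2
    nlinarith [h1, h2, mul_pos hB₁ hB₂]
  -- key sign identity
  have hkey : (M₁ - M₂) * (B₁ ^ 2 * B₂ ^ 2 * (a * B₂ + 2 * c₂))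
      = x₁ * B₂ * (c₁ * (a * B₂ + 2 * c₂) ^ 2 - c₂ * (a * B₁ + 2 * c₁) ^ 2) := by
    show (-(c₁ * x₁ / B₁ ^ 2) * (-a - 2 * c₂ / B₂) - -(c₂ * x₂ / B₂ ^ 2) * (-a - 2 * c₁ / B₁))
        * (B₁ ^ 2 * B₂ ^ 2 * (a * B₂ + 2 * c₂))
      = x₁ * B₂ * (c₁ * (a * B₂ + 2 * c₂) ^ 2 - c₂ * (a * B₁ + 2 * c₁) ^ 2)
    field_simp
    linear_combination (c₂ * (a * B₁ + 2 * c₁)) * hE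
  have hiff1 : M₁ > M₂ ↔
      c₁ * (a * B₂ + 2 * c₂) ^ 2 > c₂ * (a * B₁ + 2 * c₁) ^ 2 := by
    constructor <;> intro h
    · nlinarith [hkey, mul_pos hx₁ hB₂,
        mul_pos (mul_pos (pow_pos hB₁ 2) (pow_pos hB₂ 2)) hX]
    · nlinarith [hkey, mul_pos hx₁ hB₂,
        mul_pos (mul_pos (pow_pos hB₁ 2) (pow_pos hB₂ 2)) hX]
  set s₁ : ℝ := Real.sqrt c₁ with hs₁def
  set s₂ : ℝ := Real.sqrt c₂ with hs₂def
  have hs₁ : 0 < s₁ := Real.sqrt_pos.mpr hc₁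
  have hs₂ : 0 < s₂ := Real.sqrt_pos.mpr hc₂
  have hs₁sq : s₁ ^ 2 = c₁ := Real.sq_sqrt hc₁.le
  have hs₂sq : s₂ ^ 2 = c₂ := Real.sq_sqrt hc₂.le
  have hdiv : Real.sqrt (c₂ / c₁) = s₂ / s₁ := Real.sqrt_div hc₂.le c₁
  have hmul : Real.sqrt (c₁ * c₂) = s₁ * s₂ := Real.sqrt_mul hc₁.le c₂
  have hiff2 : c₁ * (a * B₂ + 2 * c₂) ^ 2 > c₂ * (a * B₁ + 2 * c₁) ^ 2 ↔
      s₁ * (a * B₂ + 2 * c₂) > s₂ * (a * B₁ + 2 * c₁) := by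
    have h1 : c₁ * (a * B₂ + 2 * c₂) ^ 2 = (s₁ * (a * B₂ + 2 * c₂)) ^ 2 := by
      rw [mul_pow, hs₁sq]
    have h2 : c₂ * (a * B₁ + 2 * c₁) ^ 2 = (s₂ * (a * B₁ + 2 * c₁)) ^ 2 := by
      rw [mul_pow, hs₂sq]
    rw [h1, h2, gt_iff_lt, gt_iff_lt,
      pow_lt_pow_iff_left₀ (by positivity) (by positivity) two_ne_zero]
  have hiff3 : s₁ * (a * B₂ + 2 * c₂) > s₂ * (a * B₁ + 2 * c₁) ↔
      B₂ > Real.sqrt (c₂ / c₁) * B₁ + (2 / a) * (Real.sqrt (c₁ * c₂) - c₂) := by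
    rw [hdiv, hmul, ← hs₂sq, ← hs₁sq,
      show s₂ / s₁ * B₁ + 2 / a * (s₁ * s₂ - s₂ ^ 2)
        = (a * s₂ * B₁ + 2 * s₁ ^ 2 * s₂ - 2 * s₁ * s₂ ^ 2) / (a * s₁) from by
        field_simp; ring,
      gt_iff_lt, gt_iff_lt, div_lt_iff₀ (by positivity)]
    constructor <;> intro h <;> linarith [h, sq_nonneg s₁]
  refine ⟨hiff1.trans (hiff2.trans hiff3), fun hcc => ?_⟩
  rw [hiff1.trans (hiff2.trans hiff3)]
  subst hcc
  rw [div_self hc₁.ne']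
  simp only [Real.sqrt_one, one_mul]
  have : Real.sqrt (c₁ * c₁) = c₁ := by
    rw [Real.sqrt_mul_self hc₁.le]
  rw [this]
  simp
end

section
/- In the two-SP Cournot game with W₀ units of open access bandwidth, linear inverse demand 1 - y, linear latencies, and availability α > 0, the equilibrium satisfies x_i* > 0 for i = 1,2. That is, each SP carries strictly positive traffic on its proprietary band: it is impossible that x₁* = 0 with y₁* = w₁* > 0. -/
set_option maxHeartbeats 1600000

lemma key19 (B₁ B₂ W₀ α : ℝ) (hB₁ : 0 < B₁) (hB₂ : 0 < B₂) (hW₀ : 0 < W₀)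
    (hα0 : 0 < α) (hα1 : α ≤ 1)
    (y₁ w₁ y₂ w₂ : ℝ) (h1 : 0 ≤ w₁) (h2 : w₁ ≤ y₁) (h3 : 0 ≤ w₂) (h4 : w₂ ≤ y₂)
    (hmax : ∀ a b c d : ℝ, 0 ≤ b → b ≤ a → 0 ≤ d → d ≤ c →
      a + c - a ^ 2 * (1 + (1 - α) / B₁) - c ^ 2 * (1 + (1 - α) / B₂) - a * c
        - α * ((a - b) ^ 2 / B₁ + (c - d) ^ 2 / B₂)
        - (α / W₀) * (b ^ 2 + d ^ 2) - (α / W₀) * (b * d)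
      ≤ y₁ + y₂ - y₁ ^ 2 * (1 + (1 - α) / B₁) - y₂ ^ 2 * (1 + (1 - α) / B₂) - y₁ * y₂
        - α * ((y₁ - w₁) ^ 2 / B₁ + (y₂ - w₂) ^ 2 / B₂)
        - (α / W₀) * (w₁ ^ 2 + w₂ ^ 2) - (α / W₀) * (w₁ * w₂)) :
    w₁ < y₁ := by
  by_contra hcon
  push_neg at hcon
  have hy : y₁ = w₁ := le_antisymm hcon h2
  have hB1inv : (0:ℝ) < 1 / B₁ := by positivity
  have hB2inv : (0:ℝ) < 1 / B₂ := by positivity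
  have hWinv : (0:ℝ) < 1 / W₀ := by positivity
  rcases eq_or_lt_of_le h1 with hw0 | hw0
  · -- w₁ = 0, hence y₁ = 0
    have hw1 : w₁ = 0 := hw0.symm
    have hy1 : y₁ = 0 := by rw [hy, hw1]
    -- Step 1: Φ(p) ≥ t > 0 with t = 1/(3 + 1/B₁ + 1/B₂)
    have hXpos : (0:ℝ) < 3 + 1 / B₁ + 1 / B₂ := by positivity
    obtain ⟨t, ht⟩ : ∃ x : ℝ, x = 1 / (3 + 1 / B₁ + 1 / B₂) := ⟨_, rfl⟩
    have htpos : 0 < t := by rw [ht]; positivity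
    have htid : t * (3 + 1 / B₁ + 1 / B₂) = 1 := by
      rw [ht, div_mul_cancel₀]
      exact ne_of_gt hXpos
    have ht2 : t ^ 2 * (3 + 1 / B₁ + 1 / B₂) = t := by
      rw [pow_two, mul_assoc, htid, mul_one]
    have h0 := hmax t 0 t 0 le_rfl htpos.le le_rfl htpos.le
    have hlhs : t + t - t ^ 2 * (1 + (1 - α) / B₁) - t ^ 2 * (1 + (1 - α) / B₂) - t * t
        - α * ((t - 0) ^ 2 / B₁ + (t - 0) ^ 2 / B₂)
        - (α / W₀) * ((0:ℝ) ^ 2 + (0:ℝ) ^ 2) - (α / W₀) * (0 * 0)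
        = 2 * t - t ^ 2 * (3 + 1 / B₁ + 1 / B₂) := by
      field_simp
      ring
    rw [hlhs, ht2] at h0
    have hΦpos : 0 < y₁ + y₂ - y₁ ^ 2 * (1 + (1 - α) / B₁) - y₂ ^ 2 * (1 + (1 - α) / B₂)
        - y₁ * y₂ - α * ((y₁ - w₁) ^ 2 / B₁ + (y₂ - w₂) ^ 2 / B₂)
        - (α / W₀) * (w₁ ^ 2 + w₂ ^ 2) - (α / W₀) * (w₁ * w₂) := by linarith
    -- Step 2: y₂ < 1
    have hy2lt : y₂ < 1 := by
      rw [hy1, hw1] at hΦpos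
      have h1a : (0:ℝ) ≤ 1 - α := by linarith
      have hnn1 : 0 ≤ y₂ ^ 2 * ((1 - α) / B₂) := by positivity
      have hnn2 : 0 ≤ α * ((y₂ - w₂) ^ 2 / B₂) := by positivity
      have hnn3 : 0 ≤ (α / W₀) * w₂ ^ 2 := by positivity
      have hnn0 : 0 ≤ α * ((0 - 0) ^ 2 / B₁) := by positivity
      nlinarith [sq_nonneg y₂, hΦpos]
    -- Step 3: perturb y₁ upward
    have hdenom : (0:ℝ) < 2 * (1 + 1 / B₁) := by positivity
    obtain ⟨ε, hε⟩ : ∃ x : ℝ, x = (1 - y₂) / (2 * (1 + 1 / B₁)) := ⟨_, rfl⟩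
    have h1y : 0 < 1 - y₂ := by linarith
    have hεpos : 0 < ε := by rw [hε]; positivity
    have hεid : ε * (2 * (1 + 1 / B₁)) = 1 - y₂ := by
      rw [hε, div_mul_cancel₀]
      exact ne_of_gt hdenom
    have hd : 0 < ε * (1 - y₂) - ε ^ 2 * (1 + 1 / B₁) := by
      have he2 : ε ^ 2 * (2 * (1 + 1 / B₁)) = ε * (1 - y₂) := by
        rw [pow_two, mul_assoc, hεid]
      linarith [he2, mul_pos hεpos h1y]
    have h3' := hmax ε 0 y₂ w₂ le_rfl hεpos.le h3 h4
    rw [hy1, hw1] at h3'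
    have hexp : ε * (1 - y₂) - ε ^ 2 * (1 + 1 / B₁)
        = ε - ε * y₂ - ε ^ 2 - ε ^ 2 * ((1 - α) / B₁) - α * (ε ^ 2 / B₁) := by
      field_simp
      ring
    rw [hexp] at hd
    have hsq1 : α * ((ε - 0) ^ 2 / B₁ + (y₂ - w₂) ^ 2 / B₂)
        = α * (ε ^ 2 / B₁) + α * ((y₂ - w₂) ^ 2 / B₂) := by ring
    have hsq2 : α * ((0 - 0) ^ 2 / B₁ + (y₂ - w₂) ^ 2 / B₂)
        = α * ((y₂ - w₂) ^ 2 / B₂) := by ring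
    rw [hsq1] at h3'
    rw [hsq2] at h3'
    linarith [h3', hd]
  · -- w₁ > 0, y₁ = w₁ > 0 : decrease w₁
    have hcpos : (0:ℝ) < (α / W₀) * (2 * w₁ + w₂) := by
      have : 0 < 2 * w₁ + w₂ := by linarith
      positivity
    have hkpos : (0:ℝ) < α / B₁ + α / W₀ := by positivity
    obtain ⟨c, hc⟩ : ∃ x : ℝ, x = (α / W₀) * (2 * w₁ + w₂) := ⟨_, rfl⟩
    obtain ⟨k, hk⟩ : ∃ x : ℝ, x = α / B₁ + α / W₀ := ⟨_, rfl⟩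
    rw [← hc] at hcpos
    rw [← hk] at hkpos
    obtain ⟨ε, hε⟩ : ∃ x : ℝ, x = min w₁ (c / (2 * k)) := ⟨_, rfl⟩
    have hεpos : 0 < ε := by rw [hε]; exact lt_min hw0 (by positivity)
    have hεw : ε ≤ w₁ := hε ▸ min_le_left _ _
    have h2k : ε * (2 * k) ≤ c := by
      have hεc : ε ≤ c / (2 * k) := hε ▸ min_le_right _ _
      rwa [le_div_iff₀ (by positivity)] at hεc
    have keyc : 0 < ε * c - ε ^ 2 * k := by nlinarith [hεpos, hkpos, h2k]
    have keyineq : 0 < ε * ((α / W₀) * (2 * w₁ + w₂)) - ε ^ 2 * (α / B₁ + α / W₀) := by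
      rw [← hc, ← hk]; exact keyc
    have h5 := hmax y₁ (w₁ - ε) y₂ w₂ (by linarith) (by linarith) h3 h4
    rw [hy] at h5
    have hsqA : α * ((w₁ - (w₁ - ε)) ^ 2 / B₁ + (y₂ - w₂) ^ 2 / B₂)
        = α * (ε ^ 2 / B₁) + α * ((y₂ - w₂) ^ 2 / B₂) := by ring
    have hsqB : α * ((w₁ - w₁) ^ 2 / B₁ + (y₂ - w₂) ^ 2 / B₂)
        = α * ((y₂ - w₂) ^ 2 / B₂) := by ring
    rw [hsqA, hsqB] at h5
    have hexp2 : ε * ((α / W₀) * (2 * w₁ + w₂)) - ε ^ 2 * (α / B₁ + α / W₀)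
        = ((α / W₀) * (w₁ ^ 2 + w₂ ^ 2) + (α / W₀) * (w₁ * w₂))
          - (α * (ε ^ 2 / B₁) + (α / W₀) * ((w₁ - ε) ^ 2 + w₂ ^ 2)
             + (α / W₀) * ((w₁ - ε) * w₂)) := by
      field_simp
      ring
    rw [hexp2] at keyineq
    linarith [h5, keyineq]

theorem stmt_19 (B₁ B₂ W₀ α : ℝ) (hB₁ : 0 < B₁) (hB₂ : 0 < B₂) (hW₀ : 0 < W₀)
    (hα : α ∈ Set.Ioc (0:ℝ) 1) :
    let Φ : ℝ × ℝ × ℝ × ℝ → ℝ := fun p =>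
      let y₁ := p.1; let w₁ := p.2.1; let y₂ := p.2.2.1; let w₂ := p.2.2.2
      y₁ + y₂ - y₁ ^ 2 * (1 + (1 - α) / B₁) - y₂ ^ 2 * (1 + (1 - α) / B₂) - y₁ * y₂
        - α * ((y₁ - w₁) ^ 2 / B₁ + (y₂ - w₂) ^ 2 / B₂)
        - (α / W₀) * (w₁ ^ 2 + w₂ ^ 2) - (α / W₀) * (w₁ * w₂)
    let S : Set (ℝ × ℝ × ℝ × ℝ) :=
      {p | 0 ≤ p.2.1 ∧ p.2.1 ≤ p.1 ∧ 0 ≤ p.2.2.2 ∧ p.2.2.2 ≤ p.2.2.1}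
    ∀ p ∈ S, IsMaxOn Φ S p → p.2.1 < p.1 ∧ p.2.2.2 < p.2.2.1 := by
  intro Φ S p hp hmax
  obtain ⟨y₁, w₁, y₂, w₂⟩ := p
  obtain ⟨h1, h2, h3, h4⟩ := hp
  simp only at h1 h2 h3 h4 ⊢
  have hmax' : ∀ a b c d : ℝ, 0 ≤ b → b ≤ a → 0 ≤ d → d ≤ c →
      a + c - a ^ 2 * (1 + (1 - α) / B₁) - c ^ 2 * (1 + (1 - α) / B₂) - a * c
        - α * ((a - b) ^ 2 / B₁ + (c - d) ^ 2 / B₂)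
        - (α / W₀) * (b ^ 2 + d ^ 2) - (α / W₀) * (b * d)
      ≤ y₁ + y₂ - y₁ ^ 2 * (1 + (1 - α) / B₁) - y₂ ^ 2 * (1 + (1 - α) / B₂) - y₁ * y₂
        - α * ((y₁ - w₁) ^ 2 / B₁ + (y₂ - w₂) ^ 2 / B₂)
        - (α / W₀) * (w₁ ^ 2 + w₂ ^ 2) - (α / W₀) * (w₁ * w₂) := by
    intro a b c d hb hba hd hdc
    exact hmax (show (a, b, c, d) ∈ S from ⟨hb, hba, hd, hdc⟩)
  constructor
  · exact key19 B₁ B₂ W₀ α hB₁ hB₂ hW₀ hα.1 hα.2 y₁ w₁ y₂ w₂ h1 h2 h3 h4 hmax'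
  · refine key19 B₂ B₁ W₀ α hB₂ hB₁ hW₀ hα.1 hα.2 y₂ w₂ y₁ w₁ h3 h4 h1 h2 ?_
    intro a b c d hb hba hd hdc
    linarith [hmax' c d a b hd hdc hb hba]
end
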